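/- Suppose a Latin square L of order n = 4m+2 has a maximal partial transversal T of length 2m+1. Then L decomposes into four blocks A, B, C, D of order 2m+1 (with A the submatrix on rows and columns avoided by T), each of which is a subsquare of L, where A and D are on a common symbol set S₁ and B and C on the complementary symbol set S₂. -/

import Mathlib

/-- A Latin square of order `n` as a set of triples `(r,c,s)`:
any two coordinates determine the third uniquely. -/
def IsLatinSquare {n : ℕ} (L : Finset (Fin n × Fin n × Fin n)) : Prop :=
  (∀ r c : Fin n, ∃! s : Fin n, (r, c, s) ∈ L) ∧
  (∀ r s : Fin n, ∃! c : Fin n, (r, c, s) ∈ L) ∧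
  (∀ c s : Fin n, ∃! r : Fin n, (r, c, s) ∈ L)

/-- A partial transversal: a subset of the triples with pairwise distinct
rows, columns and symbols. -/
def IsPartialTransversal {α β γ : Type*} (L T : Finset (α × β × γ)) : Prop :=
  T ⊆ L ∧ ∀ t ∈ T, ∀ t' ∈ T, t ≠ t' →
    t.1 ≠ t'.1 ∧ t.2.1 ≠ t'.2.1 ∧ t.2.2 ≠ t'.2.2

/-- A maximal partial transversal: one not properly contained in any
larger partial transversal. -/
def IsMaximalPartialTransversal {α β γ : Type*} (L T : Finset (α × β × γ)) : Prop :=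
  IsPartialTransversal L T ∧
    ∀ T' : Finset (α × β × γ), IsPartialTransversal L T' → T ⊆ T' → T' = T

/-- `L` restricted to rows `R`, columns `C` is a subsquare on symbol set `S`:
every cell of the submatrix has its symbol in `S`, and every
(row, symbol) and (column, symbol) pair from the index sets occurs. -/
def IsSubsquareOn {n : ℕ} (L : Finset (Fin n × Fin n × Fin n))
    (R C S : Finset (Fin n)) : Prop :=
  (∀ r ∈ R, ∀ c ∈ C, ∃ s ∈ S, (r, c, s) ∈ L) ∧
  (∀ r ∈ R, ∀ s ∈ S, ∃ c ∈ C, (r, c, s) ∈ L) ∧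
  (∀ c ∈ C, ∀ s ∈ S, ∃ r ∈ R, (r, c, s) ∈ L)

/-!
Let `S` be the set of symbols of `T`. By maximality every cell of `A` carries a symbol of `S`;
since `A` has as many rows and columns as `S` has symbols, `A` is a subsquare on `S`. A row of `A`
then uses up all of `S`, so its cells in `B` carry symbols of `Sᶜ`, and again counting makes `B` a
subsquare on `Sᶜ`; likewise `C`. Finally a row of `C` uses up all of `Sᶜ`, which forces the cells
of `D` back into `S`.
-/

open Finset

namespace IsLatinSquare

variable {n : ℕ} {L : Finset (Fin n × Fin n × Fin n)}

lemma col_unique (hL : IsLatinSquare L) {r c c' s : Fin n} (h : (r, c, s) ∈ L)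
    (h' : (r, c', s) ∈ L) : c = c' :=
  (hL.2.1 r s).unique h h'

lemma row_unique (hL : IsLatinSquare L) {r r' c s : Fin n} (h : (r, c, s) ∈ L)
    (h' : (r', c, s) ∈ L) : r = r' :=
  (hL.2.2 c s).unique h h'

lemma exists_mem_row_of_card_le (hL : IsLatinSquare L) {r : Fin n} {C S : Finset (Fin n)}
    (hcard : #S ≤ #C)
    (hS : ∀ c ∈ C, ∀ s, (r, c, s) ∈ L → s ∈ S) : ∀ s ∈ S, ∃ c ∈ C, (r, c, s) ∈ L := by
  choose f hf _ using hL.1 r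
  intro s hs
  obtain ⟨c, hc, rfl⟩ := surjOn_of_injOn_of_card_le f (fun c hc => hS c hc _ (hf c))
    (fun c _ c' _ h => hL.col_unique (hf c) (h ▸ hf c')) hcard hs
  exact ⟨c, hc, hf c⟩

lemma exists_mem_col_of_card_le (hL : IsLatinSquare L) {c : Fin n} {R S : Finset (Fin n)}
    (hcard : #S ≤ #R)
    (hS : ∀ r ∈ R, ∀ s, (r, c, s) ∈ L → s ∈ S) : ∀ s ∈ S, ∃ r ∈ R, (r, c, s) ∈ L := by
  choose f hf _ using fun r => hL.1 r c
  intro s hs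
  obtain ⟨r, hr, rfl⟩ := surjOn_of_injOn_of_card_le f (fun r hr => hS r hr _ (hf r))
    (fun r _ r' _ h => hL.row_unique (hf r) (h ▸ hf r')) hcard hs
  exact ⟨r, hr, hf r⟩

lemma isSubsquareOn_of_card_le (hL : IsLatinSquare L) {R C S : Finset (Fin n)} (hR : #S ≤ #R)
    (hC : #S ≤ #C)
    (hS : ∀ r ∈ R, ∀ c ∈ C, ∀ s, (r, c, s) ∈ L → s ∈ S) : IsSubsquareOn L R C S :=
  ⟨fun r hr c hc => let ⟨s, hs, _⟩ := hL.1 r c; ⟨s, hS r hr c hc s hs, hs⟩,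
    fun r hr => hL.exists_mem_row_of_card_le hC (fun c hc => hS r hr c hc),
    fun c hc => hL.exists_mem_col_of_card_le hR (fun r hr => hS r hr c hc)⟩

end IsLatinSquare

namespace IsSubsquareOn

variable {n : ℕ} {L : Finset (Fin n × Fin n × Fin n)} {R C S : Finset (Fin n)}
  {r c s : Fin n}

lemma notMem_of_mem_row (hsq : IsSubsquareOn L R C S) (hL : IsLatinSquare L) (hr : r ∈ R)
    (hc : c ∉ C) (h : (r, c, s) ∈ L) : s ∉ S := fun hs =>
  let ⟨_, hc', h'⟩ := hsq.2.1 r hr s hs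
  hc (hL.col_unique h' h ▸ hc')

lemma notMem_of_mem_col (hsq : IsSubsquareOn L R C S) (hL : IsLatinSquare L) (hr : r ∉ R)
    (hc : c ∈ C) (h : (r, c, s) ∈ L) : s ∉ S := fun hs =>
  let ⟨_, hr', h'⟩ := hsq.2.2 c hc s hs
  hr (hL.row_unique h' h ▸ hr')

end IsSubsquareOn

namespace IsPartialTransversal

variable {α β γ : Type*} {L T : Finset (α × β × γ)}

lemma injOn_row (hT : IsPartialTransversal L T) : Set.InjOn (fun t : α × β × γ => t.1) T :=
  fun t ht t' ht' h => by_contra fun hne => (hT.2 t ht t' ht' hne).1 h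

lemma injOn_col (hT : IsPartialTransversal L T) : Set.InjOn (fun t : α × β × γ => t.2.1) T :=
  fun t ht t' ht' h => by_contra fun hne => (hT.2 t ht t' ht' hne).2.1 h

lemma injOn_symbol (hT : IsPartialTransversal L T) : Set.InjOn (fun t : α × β × γ => t.2.2) T :=
  fun t ht t' ht' h => by_contra fun hne => (hT.2 t ht t' ht' hne).2.2 h

lemma insert [DecidableEq α] [DecidableEq β] [DecidableEq γ] (hT : IsPartialTransversal L T)
    {x : α × β × γ} (hx : x ∈ L) (hr : ∀ t ∈ T, t.1 ≠ x.1) (hc : ∀ t ∈ T, t.2.1 ≠ x.2.1)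
    (hs : ∀ t ∈ T, t.2.2 ≠ x.2.2) : IsPartialTransversal L (insert x T) := by
  refine ⟨insert_subset hx hT.1, fun t ht t' ht' hne => ?_⟩
  rcases mem_insert.1 ht with rfl | hmem <;> rcases mem_insert.1 ht' with rfl | hmem'
  · exact absurd rfl hne
  · exact ⟨(hr t' hmem').symm, (hc t' hmem').symm, (hs t' hmem').symm⟩
  · exact ⟨hr t hmem, hc t hmem, hs t hmem⟩
  · exact hT.2 t hmem t' hmem' hne

end IsPartialTransversal

namespace IsMaximalPartialTransversal

variable {α β γ : Type*} {L T : Finset (α × β × γ)}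

lemma toIsPartialTransversal (hT : IsMaximalPartialTransversal L T) :
    IsPartialTransversal L T :=
  hT.1

lemma mem_image_symbol [DecidableEq α] [DecidableEq β] [DecidableEq γ]
    (hT : IsMaximalPartialTransversal L T) {r : α} {c : β} {s : γ}
    (h : (r, c, s) ∈ L) (hr : r ∉ T.image (·.1)) (hc : c ∉ T.image (·.2.1)) :
    s ∈ T.image (·.2.2) := by
  simp only [mem_image, not_exists, not_and] at hr hc ⊢
  by_contra! hs
  have hins := hT.2 _ (hT.toIsPartialTransversal.insert h hr hc hs) (subset_insert _ _)
  exact hr _ (hins ▸ mem_insert_self _ T) rfl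

theorem isSubsquareOn_blocks {n : ℕ} {L T : Finset (Fin n × Fin n × Fin n)}
    (hL : IsLatinSquare L) (hT : IsMaximalPartialTransversal L T) (hn : n = 2 * #T) :
    IsSubsquareOn L (T.image (·.1))ᶜ (T.image (·.2.1))ᶜ (T.image (·.2.2)) ∧
      IsSubsquareOn L (T.image (·.1))ᶜ (T.image (·.2.1)) (T.image (·.2.2))ᶜ ∧
      IsSubsquareOn L (T.image (·.1)) (T.image (·.2.1))ᶜ (T.image (·.2.2))ᶜ ∧
      IsSubsquareOn L (T.image (·.1)) (T.image (·.2.1)) (T.image (·.2.2)) := by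
  set R := T.image (·.1)
  set C := T.image (·.2.1)
  set S := T.image (·.2.2)
  have hRcard : #R = #T := card_image_of_injOn hT.toIsPartialTransversal.injOn_row
  have hCcard : #C = #T := card_image_of_injOn hT.toIsPartialTransversal.injOn_col
  have hScard : #S = #T := card_image_of_injOn hT.toIsPartialTransversal.injOn_symbol
  have hcompl : ∀ X : Finset (Fin n), #X = #T → #Xᶜ = #T := fun X hX => by
    rw [card_compl, Fintype.card_fin, hX]; omega
  have hA : IsSubsquareOn L Rᶜ Cᶜ S :=
    hL.isSubsquareOn_of_card_le (by rw [hcompl R hRcard, hScard]) (by rw [hcompl C hCcard, hScard])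
      fun r hr c hc s h => hT.mem_image_symbol h (mem_compl.1 hr) (mem_compl.1 hc)
  have hB : IsSubsquareOn L Rᶜ C Sᶜ :=
    hL.isSubsquareOn_of_card_le (by rw [hcompl R hRcard, hcompl S hScard])
      (by rw [hCcard, hcompl S hScard])
      fun r hr c hc s h => mem_compl.2 (hA.notMem_of_mem_row hL hr (notMem_compl.2 hc) h)
  have hC : IsSubsquareOn L R Cᶜ Sᶜ :=
    hL.isSubsquareOn_of_card_le (by rw [hRcard, hcompl S hScard])
      (by rw [hcompl C hCcard, hcompl S hScard])
      fun r hr c hc s h => mem_compl.2 (hA.notMem_of_mem_col hL (notMem_compl.2 hr) hc h)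
  have hD : IsSubsquareOn L R C S :=
    hL.isSubsquareOn_of_card_le (by rw [hRcard, hScard]) (by rw [hCcard, hScard])
      fun r hr c hc s h => notMem_compl.1 (hC.notMem_of_mem_row hL hr (notMem_compl.2 hc) h)
  exact ⟨hA, hB, hC, hD⟩

end IsMaximalPartialTransversal

theorem stmt18 (m : ℕ)
    (L T : Finset (Fin (4*m+2) × Fin (4*m+2) × Fin (4*m+2)))
    (hL : IsLatinSquare L) (hT : IsMaximalPartialTransversal L T)
    (hlen : T.card = 2*m+1) :
    ∃ S₁ : Finset (Fin (4*m+2)), S₁.card = 2*m+1 ∧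
      -- unmet rows/columns versus met rows/columns
      (let UR := Finset.univ.filter (fun r => ∀ t ∈ T, t.1 ≠ r);
       let MR := Finset.univ.filter (fun r => ∃ t ∈ T, t.1 = r);
       let UC := Finset.univ.filter (fun c => ∀ t ∈ T, t.2.1 ≠ c);
       let MC := Finset.univ.filter (fun c => ∃ t ∈ T, t.2.1 = c);
       IsSubsquareOn L UR UC S₁ ∧      -- block A
       IsSubsquareOn L UR MC S₁ᶜ ∧     -- block B
       IsSubsquareOn L MR UC S₁ᶜ ∧     -- block C
       IsSubsquareOn L MR MC S₁) := by -- block D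
  refine ⟨T.image (·.2.2),
    (card_image_of_injOn hT.toIsPartialTransversal.injOn_symbol).trans hlen, ?_⟩
  have hMR : univ.filter (fun r => ∃ t ∈ T, t.1 = r) = T.image (·.1) := by ext; simp
  have hUR : univ.filter (fun r => ∀ t ∈ T, t.1 ≠ r) = (T.image (·.1))ᶜ := by
    rw [← hMR]; ext
    simp only [mem_filter, mem_univ, true_and, mem_compl, not_exists, not_and, ne_eq]
  have hMC : univ.filter (fun c => ∃ t ∈ T, t.2.1 = c) = T.image (·.2.1) := by ext; simp
  have hUC : univ.filter (fun c => ∀ t ∈ T, t.2.1 ≠ c) = (T.image (·.2.1))ᶜ := by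
    rw [← hMC]; ext
    simp only [mem_filter, mem_univ, true_and, mem_compl, not_exists, not_and, ne_eq]
  simp only [hMR, hUR, hMC, hUC]
  exact hT.isSubsquareOn_blocks hL (by omega)
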